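/- Estimate for the component map: Let i ∈ 𝕊², and let (f,(i,j)) and (g,(k,l)) be elements of A_i(𝔹⁴) × T. Then d( ((D₁[f,i,j] D₂[f,i,j]; D₃[f,i,j] D₄[f,i,j]), (i,j)), ((D₁[g,k,l] D₂[g,k,l]; D₃[g,k,l] D₄[g,k,l]), (k,l)) ) ≤ 4 ( 1 + (1 + √2) ‖g‖_{A_i(𝔹⁴)} ) · ρ_i( (f,(i,j)), (g,(k,l)) ), where d is the metric of HL(D) and ρ_i((f,(i,j)),(g,(k,l))) = ‖f − g‖_{A_i(𝔹⁴)} + ‖(i,j) − (k,l)‖_{ℝ⁶}. -/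

import Mathlib

noncomputable section

open MeasureTheory Filter

notation "ℍ" => Quaternion ℝ

/-- The set of pure imaginary unit quaternions `𝕊²`. -/
def Sph2 (i : ℍ) : Prop := i.re = 0 ∧ ‖i‖ = 1

/-- Ordered pairs of orthogonal pure imaginary unit quaternions (the set `T`). -/
def OrthPair (i j : ℍ) : Prop := Sph2 i ∧ Sph2 j ∧ (i * star j).re = 0

/-- The slice complex plane `ℂ(i) = {x + y i}`. -/
def CC (i : ℍ) : Set ℍ := {q | ∃ x y : ℝ, q = (x : ℍ) + y • i}

/-- Slice regularity of `f` on `Ω`: real differentiability together with the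
Cauchy–Riemann condition `½(∂/∂x + i ∂/∂y) f = 0` on every slice. -/
def SliceRegularOn (f : ℍ → ℍ) (Ω : Set ℍ) : Prop :=
  ∀ ⦃i : ℍ⦄, Sph2 i → ∀ x y : ℝ, ((x : ℍ) + y • i) ∈ Ω →
    DifferentiableAt ℝ f ((x : ℍ) + y • i) ∧
    fderiv ℝ f ((x : ℍ) + y • i) 1 + i * fderiv ℝ f ((x : ℍ) + y • i) i = 0

/-- Axially symmetric slice domain. -/
structure AxSymSDomain (Ω : Set ℍ) : Prop where
  isOpen : IsOpen Ω
  isConnected : IsConnected Ω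
  real_nonempty : (Ω ∩ Set.range ((↑) : ℝ → ℍ)).Nonempty
  slice_connected : ∀ ⦃i : ℍ⦄, Sph2 i →
    IsConnected {p : ℝ × ℝ | ((p.1 : ℍ) + p.2 • i) ∈ Ω}
  axial : ∀ (x y : ℝ) ⦃i : ℍ⦄, Sph2 i → ((x : ℍ) + y • i) ∈ Ω →
    ∀ ⦃j : ℍ⦄, Sph2 j → ((x : ℍ) + y • j) ∈ Ω

/-- The slice `Ω ∩ ℂ(i)` as a subset of `ℝ²`. -/
def sliceSet (Ω : Set ℍ) (i : ℍ) : Set (ℝ × ℝ) := {p | ((p.1 : ℍ) + p.2 • i) ∈ Ω}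

/-- `‖f‖²_{A_i(Ω)} = ∫_{Ω ∩ ℂ(i)} ‖f‖² dσ_i`. -/
def bergmanNormSq (Ω : Set ℍ) (i : ℍ) (f : ℍ → ℍ) : ℝ :=
  ∫ p in sliceSet Ω i, ‖f ((p.1 : ℍ) + p.2 • i)‖ ^ 2

/-- The slice regular Bergman norm `‖f‖_{A_i(Ω)}`. -/
def bergmanNorm (Ω : Set ℍ) (i : ℍ) (f : ℍ → ℍ) : ℝ :=
  Real.sqrt (bergmanNormSq Ω i f)

/-- Membership in the slice regular Bergman space `A_i(Ω)`. -/
def MemBergman (Ω : Set ℍ) (i : ℍ) (f : ℍ → ℍ) : Prop :=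
  SliceRegularOn f Ω ∧
  IntegrableOn (fun p : ℝ × ℝ => ‖f ((p.1 : ℍ) + p.2 • i)‖ ^ 2) (sliceSet Ω i)

/-- The quaternionic Bergman inner product `⟨f,g⟩ = ∫ conj(f) g dσ_i`. -/
def bergmanInner (Ω : Set ℍ) (i : ℍ) (f g : ℍ → ℍ) : ℍ :=
  ∫ p in sliceSet Ω i, star (f ((p.1 : ℍ) + p.2 • i)) * g ((p.1 : ℍ) + p.2 • i)

/-- The open unit ball `𝔹⁴ ⊆ ℍ`. -/
def B4 : Set ℍ := {q | ‖q‖ < 1}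

/-- The open unit disk `D ⊆ ℝ²`. -/
def unitDisk : Set (ℝ × ℝ) := {p | p.1 ^ 2 + p.2 ^ 2 < 1}

/-- `‖f‖²_{A_i(𝔹⁴)} = ∫_D ‖f(x + yi)‖² dμ(x,y)`. -/
def bergNormSqB (i : ℍ) (f : ℍ → ℍ) : ℝ :=
  ∫ p in unitDisk, ‖f ((p.1 : ℍ) + p.2 • i)‖ ^ 2

/-- The Bergman norm on `A_i(𝔹⁴)`. -/
def bergNormB (i : ℍ) (f : ℍ → ℍ) : ℝ := Real.sqrt (bergNormSqB i f)

/-- Membership in `A_i(𝔹⁴)`. -/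
def MemBergB (i : ℍ) (f : ℍ → ℍ) : Prop :=
  SliceRegularOn f B4 ∧
  IntegrableOn (fun p : ℝ × ℝ => ‖f ((p.1 : ℍ) + p.2 • i)‖ ^ 2) unitDisk

open Classical in
/-- `I_q`: the imaginary unit direction of `q` (an arbitrary fixed unit when `q` is real). -/
def Imu (q : ℍ) : ℍ := if q.im = 0 then ⟨0, 1, 0, 0⟩ else ‖q.im‖⁻¹ • q.im

/-- The extension operator `P_{k,·}`: for a slice function `g : ℝ² → ℍ` (representing
`x + y k ↦ g(x,y)`), `Pext k g (q) = ½[(1 + I_q k) g(x, −y) + (1 − I_q k) g(x, y)]`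
where `q = x + I_q y`, `y = ‖im q‖ ≥ 0`. -/
def Pext (k : ℍ) (g : ℝ × ℝ → ℍ) (q : ℍ) : ℍ :=
  (2⁻¹ : ℝ) • ((1 + Imu q * k) * g (q.re, -‖q.im‖) + (1 - Imu q * k) * g (q.re, ‖q.im‖))

/-- The slice function `x + y k ↦ a + b k + c l + d kl`. -/
def sliceFun (a b c d : ℝ × ℝ → ℝ) (k l : ℍ) (p : ℝ × ℝ) : ℍ :=
  (a p : ℍ) + b p • k + c p • l + d p • (k * l)

/-- `L²(D)` norm of a real function on the unit disk. -/
def L2D (a : ℝ × ℝ → ℝ) : ℝ := Real.sqrt (∫ p in unitDisk, a p ^ 2)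

/-- Finiteness of the `L²(D)` norm. -/
def MemL2D (a : ℝ × ℝ → ℝ) : Prop := IntegrableOn (fun p => a p ^ 2) unitDisk

/-- Harmonicity on the unit disk: `a` is `C²` and `∂²a/∂x² + ∂²a/∂y² = 0`. -/
def HarmonicOnDisk (a : ℝ × ℝ → ℝ) : Prop :=
  ContDiffOn ℝ 2 a unitDisk ∧ ∀ p ∈ unitDisk,
    fderiv ℝ (fun q => fderiv ℝ a q (1, 0)) p (1, 0)
      + fderiv ℝ (fun q => fderiv ℝ a q (0, 1)) p (0, 1) = 0

/-- `(a,b)` is a pair of conjugate harmonic functions on `D`: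
both harmonic and satisfying the Cauchy–Riemann equations. -/
def ConjHarmPair (a b : ℝ × ℝ → ℝ) : Prop :=
  HarmonicOnDisk a ∧ HarmonicOnDisk b ∧
  ∀ p ∈ unitDisk,
    fderiv ℝ a p (1, 0) = fderiv ℝ b p (0, 1) ∧
    fderiv ℝ a p (0, 1) = -fderiv ℝ b p (1, 0)

/-- `(a,b) ∈ HL²(D)`. -/
def HLpair (a b : ℝ × ℝ → ℝ) : Prop := ConjHarmPair a b ∧ MemL2D a ∧ MemL2D b

/-- Raw data of an element of `HL(D)`: a 2×2 matrix `(a b; c d)` of real functions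
on the disk together with a pair `(k,l)` of quaternions. -/
structure HLElem where
  a : ℝ × ℝ → ℝ
  b : ℝ × ℝ → ℝ
  c : ℝ × ℝ → ℝ
  d : ℝ × ℝ → ℝ
  k : ℍ
  l : ℍ

/-- Membership in `HL(D)`: `(a,b),(c,d) ∈ HL²(D)` and `(k,l) ∈ T`. -/
def HLElem.mem (A : HLElem) : Prop := HLpair A.a A.b ∧ HLpair A.c A.d ∧ OrthPair A.k A.l

/-- The bundle projection `P_{𝔹⁴}((a b; c d),(k,l)) = P_{k,l}[a + bk + cl + dkl]`. -/
def HLElem.proj (A : HLElem) : ℍ → ℍ := Pext A.k (sliceFun A.a A.b A.c A.d A.k A.l)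

/-- The metric of `HL(D)`. -/
def HLdist (A B : HLElem) : ℝ :=
  L2D (A.a - B.a) + L2D (A.b - B.b) + L2D (A.c - B.c) + L2D (A.d - B.d)
    + Real.sqrt (‖A.k - B.k‖ ^ 2 + ‖A.l - B.l‖ ^ 2)

/-- `Q_{k,l}[f] : (x,y) ↦ f(x + y k)`, the restriction of `f` to the slice `ℂ(k)`. -/
def Qsl (f : ℍ → ℍ) (k : ℍ) (p : ℝ × ℝ) : ℍ := f ((p.1 : ℍ) + p.2 • k)

/-- `D₁[f,k,l] = (Q[f] + conj(Q[f]))/2 = Re (Q[f])`. -/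
def Dc1 (f : ℍ → ℍ) (k _l : ℍ) (p : ℝ × ℝ) : ℝ := (Qsl f k p).re

/-- `D₂[f,k,l] = −(Q[f]·k + conj(Q[f]·k))/2 = −Re (Q[f]·k)`. -/
def Dc2 (f : ℍ → ℍ) (k _l : ℍ) (p : ℝ × ℝ) : ℝ := -(Qsl f k p * k).re

/-- `D₃[f,k,l] = −(Q[f]·l + conj(Q[f]·l))/2 = −Re (Q[f]·l)`. -/
def Dc3 (f : ℍ → ℍ) (k l : ℍ) (p : ℝ × ℝ) : ℝ := -(Qsl f k p * l).re

/-- `D₄[f,k,l] = (Q[f]·lk + conj(Q[f]·lk))/2 = Re (Q[f]·(lk))`. -/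
def Dc4 (f : ℍ → ℍ) (k l : ℍ) (p : ℝ × ℝ) : ℝ := (Qsl f k p * (l * k)).re

/-- The section map `S_{k,l}[f] = ((D₁ D₂; D₃ D₄), (k,l))`. -/
def Smap (f : ℍ → ℍ) (k l : ℍ) : HLElem :=
  ⟨Dc1 f k l, Dc2 f k l, Dc3 f k l, Dc4 f k l, k, l⟩

/-- The metric `ρ_i` on `A_i(𝔹⁴) × T`. -/
def rhoA (i : ℍ) (f : ℍ → ℍ) (k l : ℍ) (g : ℍ → ℍ) (m n : ℍ) : ℝ :=
  bergNormB i (f - g) + Real.sqrt (‖k - m‖ ^ 2 + ‖l - n‖ ^ 2)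

/-!
Every slice of a slice regular `g` on `𝔹⁴` is determined by the slice `ℂ(i)` through the
representation formula `2 g(x + yk) = (1 - ki) g(x + yi) + (1 + ki) g(x - yi)`: the difference of
the two sides, as a function of `x + yI ∈ ℂ`, satisfies the Cauchy–Riemann equation for the complex
structure `k·` on `ℍ` and vanishes on the real axis. Since
`‖1 - ki‖ = ‖k + i‖` and `‖1 + ki‖ = ‖k - i‖`, this bounds `‖g(x + yk)‖` and
`‖g(x + yk) - g(x + yi)‖` pointwise by `‖g‖` on the two slices `x ± yi`, which have the same
`L²(D)` norm. Each component difference `Re (f_i u) - Re (g_k v)` is therefore at most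
`‖f - g‖ + (‖i - k‖ + ‖u - v‖ √2) ‖g‖` in `L²(D)`, using `‖k + i‖ + ‖k - i‖ ≤ 2√2`, and the four
components `u ∈ {1, -i, -j, ji}` add up to the estimate.
-/

open Topology ENNReal

lemma Sph2.mul_self {i : ℍ} (hi : Sph2 i) : i * i = -1 := by
  have h := Quaternion.self_mul_star i
  rw [Quaternion.star_eq_neg.2 hi.1, Quaternion.normSq_eq_norm_mul_self, hi.2, mul_one,
    mul_neg] at h
  rw [← neg_neg (i * i), h, Quaternion.coe_one]

lemma Sph2.neg {i : ℍ} (hi : Sph2 i) : Sph2 (-i) :=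
  ⟨by rw [Quaternion.re_neg, hi.1, neg_zero], by rw [norm_neg, hi.2]⟩

lemma Sph2.norm_coe_add_smul_sq {k : ℍ} (hk : Sph2 k) (x y : ℝ) :
    ‖(x : ℍ) + y • k‖ ^ 2 = x ^ 2 + y ^ 2 := by
  rw [norm_add_sq_real, Quaternion.inner_def, Quaternion.norm_coe, norm_smul, hk.2,
    Real.norm_eq_abs, Real.norm_eq_abs, Quaternion.coe_mul_eq_smul]
  simp [hk.1]

lemma Sph2.norm_one_add_mul {i : ℍ} (hi : Sph2 i) (k : ℍ) : ‖1 + k * i‖ = ‖k - i‖ := by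
  rw [← mul_one ‖k - i‖, ← hi.2, ← norm_mul, sub_mul, hi.mul_self, sub_neg_eq_add, add_comm]

lemma Sph2.norm_one_sub_mul {i : ℍ} (hi : Sph2 i) (k : ℍ) : ‖1 - k * i‖ = ‖k + i‖ := by
  rw [← mul_one ‖k + i‖, ← hi.2, ← norm_mul, ← norm_neg (1 - k * i), add_mul, hi.mul_self]
  congr 1
  abel

lemma Sph2.norm_add_add_norm_sub_le {k i : ℍ} (hk : Sph2 k) (hi : Sph2 i) :
    ‖k + i‖ + ‖k - i‖ ≤ 2 * Real.sqrt 2 := by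
  have hpar := parallelogram_law_with_norm ℝ k i
  rw [hk.2, hi.2] at hpar
  have h2 : Real.sqrt 2 ^ 2 = 2 := Real.sq_sqrt zero_le_two
  nlinarith [sq_nonneg (‖k + i‖ - ‖k - i‖), Real.sqrt_nonneg 2]

lemma norm_mul_sub_mul_le {j i l k : ℍ} (hi : Sph2 i) (hl : Sph2 l) :
    ‖j * i - l * k‖ ≤ ‖j - l‖ + ‖i - k‖ := by
  calc ‖j * i - l * k‖ = ‖(j - l) * i + l * (i - k)‖ := by noncomm_ring
    _ ≤ ‖j - l‖ + ‖i - k‖ := by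
      grw [norm_add_le, norm_mul, norm_mul, hi.2, hl.2, mul_one, one_mul]

lemma Quaternion.abs_re_le_norm (q : ℍ) : |q.re| ≤ ‖q‖ := by
  simpa [Quaternion.inner_def] using abs_real_inner_le_norm q 1

lemma Quaternion.norm_two : ‖(2 : ℍ)‖ = 2 := by
  rw [← map_ofNat (algebraMap ℝ ℍ) 2, norm_algebraMap']; norm_num

open Complex in
def sliceEmbedding (k : ℍ) : ℂ →L[ℝ] ℍ := reCLM.smulRight 1 + imCLM.smulRight k

lemma sliceEmbedding_apply (k : ℍ) (z : ℂ) : sliceEmbedding k z = (z.re : ℍ) + z.im • k := by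
  simp [sliceEmbedding, ← Quaternion.coe_mul_eq_smul]

lemma Sph2.sliceEmbedding_mem_B4 {k : ℍ} (hk : Sph2 k) {z : ℂ} (hz : z ∈ Metric.ball (0 : ℂ) 1) :
    sliceEmbedding k z ∈ B4 := by
  have h : ‖sliceEmbedding k z‖ ^ 2 = ‖z‖ ^ 2 := by
    rw [sliceEmbedding_apply, hk.norm_coe_add_smul_sq, Complex.sq_norm, Complex.normSq_apply]; ring
  rw [mem_ball_zero_iff] at hz
  exact (sq_lt_one_iff₀ (norm_nonneg _)).1 (h ▸ pow_lt_one₀ (norm_nonneg z) hz two_ne_zero)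

/-- Cauchy–Riemann equation for `H : ℂ → ℍ` with respect to the complex structure on `ℍ` given by
left multiplication by `k`. -/
def HasSliceDerivAt (k : ℍ) (H : ℂ → ℍ) (z : ℂ) : Prop :=
  ∃ D : ℂ →L[ℝ] ℍ, HasFDerivAt H D z ∧ D Complex.I = k * D 1

lemma HasSliceDerivAt.sub {k : ℍ} {H G : ℂ → ℍ} {z : ℂ} (hH : HasSliceDerivAt k H z)
    (hG : HasSliceDerivAt k G z) : HasSliceDerivAt k (fun w => H w - G w) z := by
  obtain ⟨D, hD, hDI⟩ := hH
  obtain ⟨E, hE, hEI⟩ := hG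
  exact ⟨D - E, hD.sub hE, by simp [hDI, hEI, mul_sub]⟩

lemma HasSliceDerivAt.const_mul {k m c : ℍ} {H : ℂ → ℍ} {z : ℂ} (hH : HasSliceDerivAt m H z)
    (hc : k * c = c * m) : HasSliceDerivAt k (fun w => c * H w) z := by
  obtain ⟨D, hD, hDI⟩ := hH
  refine ⟨(ContinuousLinearMap.mul ℝ ℍ c).comp D,
    (ContinuousLinearMap.mul ℝ ℍ c).hasFDerivAt.comp z hD, ?_⟩
  simp [hDI, ← mul_assoc, hc]

lemma SliceRegularOn.hasSliceDerivAt {g : ℍ → ℍ} (hg : SliceRegularOn g B4) {m : ℍ}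
    (hm : Sph2 m) {z : ℂ} (hz : z ∈ Metric.ball (0 : ℂ) 1) :
    HasSliceDerivAt m (fun w => g (sliceEmbedding m w)) z := by
  have hmem := hm.sliceEmbedding_mem_B4 hz
  rw [sliceEmbedding_apply] at hmem
  obtain ⟨hdiff, hCR⟩ := hg hm z.re z.im hmem
  rw [← sliceEmbedding_apply] at hdiff hCR
  refine ⟨(fderiv ℝ g (sliceEmbedding m z)).comp (sliceEmbedding m),
    hdiff.hasFDerivAt.comp z (sliceEmbedding m).hasFDerivAt, ?_⟩
  have h1 : sliceEmbedding m 1 = 1 := by simp [sliceEmbedding_apply]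
  have hI : sliceEmbedding m Complex.I = m := by simp [sliceEmbedding_apply]
  simp only [ContinuousLinearMap.comp_apply, h1, hI]
  -- multiply the Cauchy–Riemann equation `D 1 + m D m = 0` by `m`
  have := congrArg (m * ·) hCR
  simp only [mul_add, ← mul_assoc, hm.mul_self, neg_one_mul, mul_zero] at this
  exact (add_neg_eq_zero.1 this).symm

/-- These projections turn maps satisfying `HasSliceDerivAt k` into holomorphic functions, and
together they separate the points of `ℍ` (`slicePairing_star_re`). -/
def slicePairing (k u : ℍ) : ℍ →L[ℝ] ℂ :=
  LinearMap.toContinuousLinearMap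
    { toFun := fun q => ⟨(q * u).re, -(q * u * k).re⟩
      map_add' := fun a b => by apply Complex.ext <;> simp [-Quaternion.re_mul, add_mul, add_comm]
      map_smul' := fun r a => by apply Complex.ext <;> simp [-Quaternion.re_mul] }

lemma slicePairing_apply (k u q : ℍ) : slicePairing k u q = ⟨(q * u).re, -(q * u * k).re⟩ :=
  rfl

lemma Sph2.slicePairing_mul_left {k : ℍ} (hk : Sph2 k) (u q : ℍ) :
    slicePairing k u (k * q) = Complex.I * slicePairing k u q := by
  have hcyc : ∀ a b : ℍ, (a * b).re = (b * a).re := fun a b => by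
    simp only [Quaternion.re_mul]; ring
  apply Complex.ext
  · simp [slicePairing_apply, mul_assoc, hcyc k]
  · simp [slicePairing_apply, mul_assoc, hcyc k, hk.mul_self]

lemma slicePairing_star_re (k q : ℍ) :
    (slicePairing k (star q) q).re = Quaternion.normSq q := by
  rw [slicePairing_apply, Quaternion.self_mul_star, Quaternion.re_coe]

lemma HasSliceDerivAt.differentiableAt_slicePairing {k : ℍ} (hk : Sph2 k) {H : ℂ → ℍ}
    {z : ℂ} (hH : HasSliceDerivAt k H z) (u : ℍ) :
    DifferentiableAt ℂ (fun w => slicePairing k u (H w)) z := by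
  obtain ⟨D, hD, hDI⟩ := hH
  have hPD := (slicePairing k u).hasFDerivAt.comp z hD
  -- `P ∘ D` commutes with multiplication by `i`, hence is complex linear
  have hlin : ((slicePairing k u).comp D : ℂ →L[ℝ] ℂ) =
      (ContinuousLinearMap.toSpanSingleton ℂ (slicePairing k u (D 1))).restrictScalars ℝ := by
    rw [Complex.restrictScalars_toSpanSingleton]
    refine ContinuousLinearMap.coe_injective (Complex.basisOneI.ext fun b => ?_)
    fin_cases b <;> simp [hDI, hk.slicePairing_mul_left, mul_comm]
  exact (hasFDerivAt_of_restrictScalars ℝ hPD hlin.symm).differentiableAt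

lemma eqOn_zero_of_hasSliceDerivAt {k : ℍ} (hk : Sph2 k) {H : ℂ → ℍ}
    (hH : ∀ z ∈ Metric.ball (0 : ℂ) 1, HasSliceDerivAt k H z)
    (h_real : ∀ r : ℝ, r ∈ Set.Ioo (-1) 1 → H r = 0) :
    Set.EqOn H 0 (Metric.ball (0 : ℂ) 1) := by
  have hofReal : Tendsto ((↑) : ℝ → ℂ) (𝓝[≠] 0) (𝓝[≠] 0) :=
    tendsto_nhdsWithin_of_tendsto_nhds_of_eventually_within _
      ((Complex.continuous_ofReal.tendsto' 0 0 Complex.ofReal_zero).mono_left nhdsWithin_le_nhds)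
      (eventually_nhdsWithin_of_forall fun r hr => Complex.ofReal_ne_zero.2 hr)
  have h_real' : ∀ᶠ r : ℝ in 𝓝[≠] 0, H r = 0 :=
    eventually_nhdsWithin_of_eventually_nhds
      (Filter.mem_of_superset (Ioo_mem_nhds (by norm_num) (by norm_num)) h_real)
  intro z hz
  -- identity theorem for each holomorphic projection, then `u = star (H z)` recovers `‖H z‖²`
  have hP : ∀ u, slicePairing k u (H z) = 0 := fun u =>
    (DifferentiableOn.analyticOnNhd
      (fun w hw => ((hH w hw).differentiableAt_slicePairing hk u).differentiableWithinAt)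
      Metric.isOpen_ball).eqOn_zero_of_preconnected_of_frequently_eq_zero
      (convex_ball (0 : ℂ) 1).isPreconnected (Metric.mem_ball_self one_pos)
      (hofReal.frequently (h_real'.mono fun r hr => by simp [hr]).frequently) hz
  have := congrArg Complex.re (hP (star (H z)))
  rwa [slicePairing_star_re, Complex.zero_re, Quaternion.normSq_eq_zero] at this

lemma mem_ball_of_mem_unitDisk {p : ℝ × ℝ} (hp : p ∈ unitDisk) :
    Complex.equivRealProd.symm p ∈ Metric.ball (0 : ℂ) 1 := by
  have h : ‖Complex.equivRealProd.symm p‖ ^ 2 < 1 := by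
    rw [Complex.sq_norm, Complex.normSq_apply]
    simpa [sq, unitDisk] using hp
  rwa [mem_ball_zero_iff, ← sq_lt_one_iff₀ (norm_nonneg _)]

lemma Qsl_eq_sliceEmbedding (g : ℍ → ℍ) (k : ℍ) (p : ℝ × ℝ) :
    Qsl g k p = g (sliceEmbedding k (Complex.equivRealProd.symm p)) := by
  simp [Qsl, sliceEmbedding_apply]

theorem SliceRegularOn.two_mul_Qsl_eq {g : ℍ → ℍ} (hg : SliceRegularOn g B4) {i k : ℍ}
    (hi : Sph2 i) (hk : Sph2 k) {p : ℝ × ℝ} (hp : p ∈ unitDisk) :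
    2 * Qsl g k p = (1 - k * i) * Qsl g i p + (1 + k * i) * Qsl g i (p.1, -p.2) := by
  set H : ℂ → ℍ := fun z => 2 * g (sliceEmbedding k z) - (1 - k * i) * g (sliceEmbedding i z)
    - (1 + k * i) * g (sliceEmbedding (-i) z) with hH
  have hH_slice : ∀ z ∈ Metric.ball (0 : ℂ) 1, HasSliceDerivAt k H z := fun z hz =>
    (((hg.hasSliceDerivAt hk hz).const_mul (Commute.ofNat_right k 2).eq).sub
      ((hg.hasSliceDerivAt hi hz).const_mul (by
        rw [mul_sub, sub_mul, ← mul_assoc, hk.mul_self, mul_assoc k i i, hi.mul_self]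
        noncomm_ring))).sub
      ((hg.hasSliceDerivAt hi.neg hz).const_mul (by
        rw [mul_add, add_mul, ← mul_assoc, hk.mul_self, mul_neg, mul_neg, mul_assoc k i i,
          hi.mul_self]
        noncomm_ring))
  have hH_real : ∀ r : ℝ, r ∈ Set.Ioo (-1) 1 → H r = 0 := fun r _ => by
    simp only [hH, sliceEmbedding_apply, Complex.ofReal_re, Complex.ofReal_im, zero_smul, add_zero]
    noncomm_ring
  have := eqOn_zero_of_hasSliceDerivAt hk hH_slice hH_real (mem_ball_of_mem_unitDisk hp)
  simp only [hH, Pi.zero_apply, sub_sub, sub_eq_zero] at this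
  simpa [Qsl_eq_sliceEmbedding, sliceEmbedding_apply] using this

lemma SliceRegularOn.norm_Qsl_le {g : ℍ → ℍ} (hg : SliceRegularOn g B4) {i k : ℍ}
    (hi : Sph2 i) (hk : Sph2 k) {p : ℝ × ℝ} (hp : p ∈ unitDisk) :
    ‖Qsl g k p‖ ≤ (‖k + i‖ * ‖Qsl g i p‖ + ‖k - i‖ * ‖Qsl g i (p.1, -p.2)‖) / 2 := by
  have h := congrArg norm (hg.two_mul_Qsl_eq hi hk hp)
  rw [norm_mul, Quaternion.norm_two] at h
  have := norm_add_le ((1 - k * i) * Qsl g i p) ((1 + k * i) * Qsl g i (p.1, -p.2))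
  rw [norm_mul, norm_mul, hi.norm_one_sub_mul, hi.norm_one_add_mul, ← h] at this
  linarith

lemma SliceRegularOn.norm_Qsl_sub_le {g : ℍ → ℍ} (hg : SliceRegularOn g B4) {i k : ℍ}
    (hi : Sph2 i) (hk : Sph2 k) {p : ℝ × ℝ} (hp : p ∈ unitDisk) :
    ‖Qsl g k p - Qsl g i p‖ ≤ ‖k - i‖ * (‖Qsl g i p‖ + ‖Qsl g i (p.1, -p.2)‖) / 2 := by
  have h : 2 * (Qsl g k p - Qsl g i p) = (1 + k * i) * (Qsl g i (p.1, -p.2) - Qsl g i p) := by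
    rw [mul_sub, hg.two_mul_Qsl_eq hi hk hp]; noncomm_ring
  have h := congrArg norm h
  rw [norm_mul, norm_mul, Quaternion.norm_two, hi.norm_one_add_mul] at h
  have := norm_sub_le (Qsl g i (p.1, -p.2)) (Qsl g i p)
  nlinarith [norm_nonneg (k - i)]

lemma abs_re_mul_sub_re_mul_le (F G : ℍ) {u : ℍ} (hu : ‖u‖ = 1) (v : ℍ) :
    |(F * u).re - (G * v).re| ≤ ‖F - G‖ + ‖G‖ * ‖u - v‖ :=
  calc |(F * u).re - (G * v).re| = |((F - G) * u + G * (u - v)).re| := by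
        rw [← Quaternion.re_sub]; congr 2; noncomm_ring
    _ ≤ ‖(F - G) * u + G * (u - v)‖ := Quaternion.abs_re_le_norm _
    _ ≤ ‖F - G‖ + ‖G‖ * ‖u - v‖ := by grw [norm_add_le, norm_mul, norm_mul, hu, mul_one]

section Lp

variable {α E F : Type*} [MeasurableSpace α] {μ : Measure α} [NormedAddCommGroup E]
  [NormedAddCommGroup F]

lemma sqrt_integral_norm_sq_eq_toReal_eLpNorm {f : α → E} (hf : AEStronglyMeasurable f μ) :
    Real.sqrt (∫ x, ‖f x‖ ^ 2 ∂μ) = (eLpNorm f 2 μ).toReal := by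
  by_cases hL2 : MemLp f 2 μ
  · rw [hL2.eLpNorm_eq_integral_rpow_norm two_ne_zero ENNReal.ofNat_ne_top,
      ENNReal.toReal_ofReal (by positivity), Real.sqrt_eq_rpow]
    norm_num
  · have hint : ¬ Integrable (fun x => ‖f x‖ ^ 2) μ := (memLp_two_iff_integrable_sq_norm hf).not.1 hL2
    have htop : eLpNorm f 2 μ = ⊤ := by
      by_contra h
      exact hL2 ⟨hf, lt_top_iff_ne_top.2 h⟩
    rw [integral_undef hint, htop, Real.sqrt_zero, ENNReal.toReal_top]

lemma toReal_eLpNorm_le_of_norm_le {p : ℝ≥0∞} (hp : 1 ≤ p) {d : α → F} {Φ Ψ Χ : α → E}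
    (hΦ : MemLp Φ p μ) (hΨ : MemLp Ψ p μ) (hΧ : MemLp Χ p μ) {a b : ℝ} (ha : 0 ≤ a)
    (hb : 0 ≤ b) (h : ∀ᵐ x ∂μ, ‖d x‖ ≤ ‖Φ x‖ + a * ‖Ψ x‖ + b * ‖Χ x‖) :
    (eLpNorm d p μ).toReal ≤
      (eLpNorm Φ p μ).toReal + a * (eLpNorm Ψ p μ).toReal + b * (eLpNorm Χ p μ).toReal := by
  have hΨa : MemLp (a • fun x => ‖Ψ x‖) p μ := hΨ.norm.const_smul a
  have hΧb : MemLp (b • fun x => ‖Χ x‖) p μ := hΧ.norm.const_smul b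
  have hle : eLpNorm d p μ ≤
      eLpNorm Φ p μ + ENNReal.ofReal a * eLpNorm Ψ p μ + ENNReal.ofReal b * eLpNorm Χ p μ :=
    calc eLpNorm d p μ
        ≤ eLpNorm ((fun x => ‖Φ x‖) + (a • fun x => ‖Ψ x‖) + (b • fun x => ‖Χ x‖)) p μ :=
          eLpNorm_mono_ae_real h
      _ ≤ _ := by
          grw [eLpNorm_add_le (hΦ.norm.add hΨa).1 hΧb.1 hp, eLpNorm_add_le hΦ.norm.1 hΨa.1 hp,
            eLpNorm_const_smul, eLpNorm_const_smul, eLpNorm_norm, eLpNorm_norm, eLpNorm_norm,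
            Real.enorm_of_nonneg ha, Real.enorm_of_nonneg hb]
  have hfin : ENNReal.ofReal a * eLpNorm Ψ p μ ≠ ⊤ :=
    ENNReal.mul_ne_top ENNReal.ofReal_ne_top hΨ.eLpNorm_ne_top
  have hfin' : ENNReal.ofReal b * eLpNorm Χ p μ ≠ ⊤ :=
    ENNReal.mul_ne_top ENNReal.ofReal_ne_top hΧ.eLpNorm_ne_top
  refine (ENNReal.toReal_mono ?_ hle).trans_eq ?_
  · finiteness
  · rw [ENNReal.toReal_add (ENNReal.add_ne_top.2 ⟨hΦ.eLpNorm_ne_top, hfin⟩) hfin',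
      ENNReal.toReal_add hΦ.eLpNorm_ne_top hfin, ENNReal.toReal_mul, ENNReal.toReal_mul,
      ENNReal.toReal_ofReal ha, ENNReal.toReal_ofReal hb]

end Lp

local notation "μD" => volume.restrict unitDisk

lemma measurableSet_unitDisk : MeasurableSet unitDisk :=
  (isOpen_lt (by fun_prop) continuous_const).measurableSet

lemma measurePreserving_reflect :
    MeasurePreserving (fun p : ℝ × ℝ => (p.1, -p.2)) μD μD := by
  have h : MeasurePreserving (fun p : ℝ × ℝ => (p.1, -p.2)) :=
    Measure.volume_eq_prod ℝ ℝ ▸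
      (MeasurePreserving.id volume).prod (Measure.measurePreserving_neg volume)
  have hpre : (fun p : ℝ × ℝ => (p.1, -p.2)) ⁻¹' unitDisk = unitDisk := by
    ext p; simp [unitDisk]
  have := h.restrict_preimage measurableSet_unitDisk
  rwa [hpre] at this

lemma L2D_eq_toReal_eLpNorm {a : ℝ × ℝ → ℝ} (ha : AEStronglyMeasurable a μD) :
    L2D a = (eLpNorm a 2 μD).toReal := by
  simpa [L2D] using sqrt_integral_norm_sq_eq_toReal_eLpNorm ha

lemma bergNormB_eq_toReal_eLpNorm {f : ℍ → ℍ} {i : ℍ} (hf : AEStronglyMeasurable (Qsl f i) μD) :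
    bergNormB i f = (eLpNorm (Qsl f i) 2 μD).toReal :=
  sqrt_integral_norm_sq_eq_toReal_eLpNorm hf

lemma SliceRegularOn.continuousOn_Qsl {g : ℍ → ℍ} (hg : SliceRegularOn g B4) {m : ℍ}
    (hm : Sph2 m) : ContinuousOn (Qsl g m) unitDisk := by
  intro p hp
  have hmem : (p.1 : ℍ) + p.2 • m ∈ B4 := by
    simpa [sliceEmbedding_apply] using hm.sliceEmbedding_mem_B4 (mem_ball_of_mem_unitDisk hp)
  exact (ContinuousAt.comp (g := g) (f := fun q : ℝ × ℝ => (q.1 : ℍ) + q.2 • m)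
    (hg hm p.1 p.2 hmem).1.continuousAt
    ((Quaternion.continuous_coe.comp continuous_fst).add
      (continuous_snd.smul continuous_const)).continuousAt).continuousWithinAt

lemma SliceRegularOn.aestronglyMeasurable_Qsl {g : ℍ → ℍ} (hg : SliceRegularOn g B4) {m : ℍ}
    (hm : Sph2 m) : AEStronglyMeasurable (Qsl g m) μD :=
  (hg.continuousOn_Qsl hm).aestronglyMeasurable measurableSet_unitDisk

lemma MemBergB.memLp_Qsl {f : ℍ → ℍ} {i : ℍ} (hf : MemBergB i f) (hi : Sph2 i) :
    MemLp (Qsl f i) 2 μD :=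
  (memLp_two_iff_integrable_sq_norm (hf.1.aestronglyMeasurable_Qsl hi)).2 hf.2

theorem L2D_re_mul_sub_re_mul_le {f g : ℍ → ℍ} {i k : ℍ} (hi : Sph2 i) (hk : Sph2 k)
    (hf : MemBergB i f) (hg : MemBergB i g) {u v : ℍ} (hu : ‖u‖ = 1) {c : ℝ}
    (huv : ‖u - v‖ ≤ c) :
    L2D (fun p => (Qsl f i p * u).re - (Qsl g k p * v).re)
      ≤ bergNormB i (f - g) + (‖i - k‖ + c * Real.sqrt 2) * bergNormB i g := by
  have hc : 0 ≤ c := (norm_nonneg _).trans huv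
  have hd : AEStronglyMeasurable (fun p => (Qsl f i p * u).re - (Qsl g k p * v).re) μD :=
    ((Quaternion.continuous_re.comp_continuousOn
      ((hf.1.continuousOn_Qsl hi).mul continuousOn_const)).sub
      (Quaternion.continuous_re.comp_continuousOn
        ((hg.1.continuousOn_Qsl hk).mul continuousOn_const))).aestronglyMeasurable
      measurableSet_unitDisk
  have hfg : MemLp (Qsl (f - g) i) 2 μD := (hf.memLp_Qsl hi).sub (hg.memLp_Qsl hi)
  have hg' : MemLp (Qsl g i ∘ fun p => (p.1, -p.2)) 2 μD :=
    (hg.memLp_Qsl hi).comp_measurePreserving measurePreserving_reflect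
  have hrefl : eLpNorm (Qsl g i ∘ fun p => (p.1, -p.2)) 2 μD = eLpNorm (Qsl g i) 2 μD :=
    eLpNorm_comp_measurePreserving (hg.memLp_Qsl hi).1 measurePreserving_reflect
  have hpt : ∀ᵐ p ∂μD, ‖(Qsl f i p * u).re - (Qsl g k p * v).re‖ ≤ ‖Qsl (f - g) i p‖
      + (‖k - i‖ + c * ‖k + i‖) / 2 * ‖Qsl g i p‖
      + (‖k - i‖ + c * ‖k - i‖) / 2 * ‖(Qsl g i ∘ fun p => (p.1, -p.2)) p‖ := by
    refine ae_restrict_of_forall_mem measurableSet_unitDisk fun p hp => ?_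
    have h1 := abs_re_mul_sub_re_mul_le (Qsl f i p) (Qsl g k p) hu v
    have h2 := norm_sub_le_norm_sub_add_norm_sub (Qsl f i p) (Qsl g i p) (Qsl g k p)
    have h3 := hg.1.norm_Qsl_sub_le hi hk hp
    have h4 := mul_le_mul_of_nonneg_left huv (norm_nonneg (Qsl g k p))
    have h5 := mul_le_mul_of_nonneg_right (hg.1.norm_Qsl_le hi hk hp) hc
    rw [norm_sub_rev (Qsl g i p)] at h2
    simp only [Real.norm_eq_abs, Function.comp_apply]
    change _ ≤ ‖Qsl f i p - Qsl g i p‖ + _ + _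
    linarith
  have hmain := toReal_eLpNorm_le_of_norm_le one_le_two hfg (hg.memLp_Qsl hi) hg' (by positivity)
    (by positivity) hpt
  rw [hrefl, ← bergNormB_eq_toReal_eLpNorm hfg.1, ← bergNormB_eq_toReal_eLpNorm (hg.memLp_Qsl hi).1,
    ← L2D_eq_toReal_eLpNorm hd] at hmain
  have hsum := hk.norm_add_add_norm_sub_le hi
  have hγ : 0 ≤ bergNormB i g := Real.sqrt_nonneg _
  rw [norm_sub_rev i k]
  nlinarith [mul_le_mul_of_nonneg_left hsum (mul_nonneg hc hγ)]

lemma HLdist_Smap_eq (f g : ℍ → ℍ) (i j k l : ℍ) :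
    HLdist (Smap f i j) (Smap g k l)
      = L2D (fun p => (Qsl f i p * 1).re - (Qsl g k p * 1).re)
        + L2D (fun p => (Qsl f i p * -i).re - (Qsl g k p * -k).re)
        + L2D (fun p => (Qsl f i p * -j).re - (Qsl g k p * -l).re)
        + L2D (fun p => (Qsl f i p * (j * i)).re - (Qsl g k p * (l * k)).re)
        + Real.sqrt (‖i - k‖ ^ 2 + ‖j - l‖ ^ 2) := by
  simp only [HLdist, Smap, mul_one, mul_neg, Quaternion.re_neg]
  rfl

/-- Estimate for the component map: the `HL(D)` distance between the component data of
`(f,(i,j))` and `(g,(k,l))` is controlled by `ρ_i`. -/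
theorem components_estimate (i j k l : ℍ) (hij : OrthPair i j) (hkl : OrthPair k l)
    (f g : ℍ → ℍ) (hf : MemBergB i f) (hg : MemBergB i g) :
    HLdist (Smap f i j) (Smap g k l)
      ≤ 4 * (1 + (1 + Real.sqrt 2) * bergNormB i g) * rhoA i f i j g k l := by
  obtain ⟨hi, hj, -⟩ := hij
  obtain ⟨hk, hl, -⟩ := hkl
  have hbound := fun {u v : ℍ} (hu : ‖u‖ = 1) {c : ℝ} (huv : ‖u - v‖ ≤ c) =>
    L2D_re_mul_sub_re_mul_le hi hk hf hg hu huv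
  have h1 := hbound norm_one (c := 0) (by rw [sub_self, norm_zero])
  have h2 := hbound (u := -i) (v := -k) (by rw [norm_neg, hi.2]) (c := ‖i - k‖)
    (by rw [← neg_sub', norm_neg])
  have h3 := hbound (u := -j) (v := -l) (by rw [norm_neg, hj.2]) (c := ‖j - l‖)
    (by rw [← neg_sub', norm_neg])
  have h4 := hbound (by rw [norm_mul, hj.2, hi.2, mul_one]) (norm_mul_sub_mul_le (k := k) hi hl)
  rw [HLdist_Smap_eq, rhoA]
  set ε := Real.sqrt (‖i - k‖ ^ 2 + ‖j - l‖ ^ 2)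
  have ha : ‖i - k‖ ≤ ε := Real.le_sqrt_of_sq_le (le_add_of_nonneg_right (sq_nonneg _))
  have hb : ‖j - l‖ ≤ ε := Real.le_sqrt_of_sq_le (le_add_of_nonneg_left (sq_nonneg _))
  have hA : 0 ≤ bergNormB i (f - g) := Real.sqrt_nonneg _
  have hγ : 0 ≤ bergNormB i g := Real.sqrt_nonneg _
  have hsγ : 0 ≤ Real.sqrt 2 * bergNormB i g := mul_nonneg (Real.sqrt_nonneg 2) hγ
  nlinarith [mul_nonneg hγ hA, mul_nonneg hsγ hA, mul_le_mul_of_nonneg_left ha hγ,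
    mul_le_mul_of_nonneg_left ha hsγ, mul_le_mul_of_nonneg_left hb hsγ, (Real.sqrt_nonneg _ : 0 ≤ ε)]
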